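/- arXiv:0810.4834 — 4 statements merged into one kernel-verified Lean document; each statement's English description precedes it below -/
import Mathlib

section
/- Let f : [0,∞) → ℂ be measurable and suppose the radial function φ : ℝ³ → ℂ defined by φ(x) = f(|x|) is integrable on ℝ³. Then for every ξ ∈ ℝ³ with ξ ≠ 0, the Fourier transform of φ (with the convention 𝓕φ(ξ) = ∫_{ℝ³} φ(x) e^{−2πi x·ξ} dx) satisfies 𝓕φ(ξ) = (2/|ξ|) ∫_0^∞ f(s) · s · sin(2π |ξ| s) ds. -/
/-!
By rotation invariance of the Fourier transform of a radial function we may move `ξ` to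
`(r, 0)`, `r = |ξ|`, in `ℝ × ℂ ≅ ℝ³`. Slicing orthogonally to the first axis, the slice at height `z`
contributes `2π ∫_{s > |z|} s f(s) ds` (polar coordinates in `ℂ`, then `s = √(z² + t²)`).
Exchanging the `z`- and `s`-integrals leaves `∫_{-s}^{s} e^{-2πi z r} dz = sin(2π r s) / (π r)`,
which gives the formula. Integrability of `s² f(s)` on `(0, ∞)`, the radial form of the
integrability of `φ`, justifies both applications of Fubini.
-/

open MeasureTheory Set Real
open scoped RealInnerProductSpace FourierTransform

section Rotation

variable {V W : Type*} [NormedAddCommGroup V] [InnerProductSpace ℝ V] [FiniteDimensional ℝ V]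
  [NormedAddCommGroup W] [InnerProductSpace ℝ W] [FiniteDimensional ℝ W]

theorem exists_linearIsometryEquiv_apply_eq (h : Module.finrank ℝ V = Module.finrank ℝ W)
    {v : V} {w : W} (hvw : ‖v‖ = ‖w‖) : ∃ A : V ≃ₗᵢ[ℝ] W, A v = w := by
  let B : V ≃ₗᵢ[ℝ] W :=
    ((stdOrthonormalBasis ℝ V).reindex (finCongr h)).repr.trans (stdOrthonormalBasis ℝ W).repr.symm
  exact ⟨B.trans (Submodule.reflection (ℝ ∙ (B v - w))ᗮ),
    Submodule.reflection_sub (by rw [B.norm_map, hvw])⟩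

variable [MeasurableSpace V] [BorelSpace V] [MeasurableSpace W] [BorelSpace W]
  {E : Type*} [NormedAddCommGroup E] [NormedSpace ℂ E]

theorem fourier_norm_comp_eq (h : Module.finrank ℝ V = Module.finrank ℝ W) (f : ℝ → E)
    {v : V} {w : W} (hvw : ‖v‖ = ‖w‖) :
    𝓕 (fun x : V => f ‖x‖) v = 𝓕 (fun y : W => f ‖y‖) w := by
  obtain ⟨A, rfl⟩ := exists_linearIsometryEquiv_apply_eq h hvw
  rw [← Real.fourier_comp_linearIsometry]
  simp [Function.comp_def]

end Rotation

section Slices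

variable {E : Type*} [NormedAddCommGroup E] [NormedSpace ℝ E]

theorem image_sqrt_sq_add_sq_Ioi (z : ℝ) : (fun t => √(z ^ 2 + t ^ 2)) '' Ioi 0 = Ioi |z| := by
  ext s
  simp only [mem_image, mem_Ioi]
  constructor
  · rintro ⟨t, ht, rfl⟩
    rw [← sqrt_sq_eq_abs]
    exact sqrt_lt_sqrt (sq_nonneg z) (by nlinarith)
  · intro hs
    have hzs : z ^ 2 < s ^ 2 := sq_lt_sq.2 (by rwa [abs_of_pos ((abs_nonneg z).trans_lt hs)])
    refine ⟨√(s ^ 2 - z ^ 2), sqrt_pos.2 (by linarith), ?_⟩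
    rw [sq_sqrt (by linarith), add_sub_cancel, sqrt_sq ((abs_nonneg z).trans hs.le)]

theorem injOn_sqrt_sq_add_sq_Ioi (z : ℝ) : InjOn (fun t => √(z ^ 2 + t ^ 2)) (Ioi 0) := by
  intro a ha b hb hab
  rw [sqrt_inj (by positivity) (by positivity), add_right_inj] at hab
  exact (sq_eq_sq₀ (le_of_lt ha) (le_of_lt hb)).1 hab

theorem integral_Ioi_smul_comp_sqrt_sq_add_sq (g : ℝ → E) (z : ℝ) :
    ∫ t in Ioi (0 : ℝ), t • g √(z ^ 2 + t ^ 2) = ∫ s in Ioi |z|, s • g s := by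
  have hderiv : ∀ t ∈ Ioi (0 : ℝ),
      HasDerivWithinAt (fun t => √(z ^ 2 + t ^ 2)) (t / √(z ^ 2 + t ^ 2)) (Ioi 0) t := by
    intro t (ht : 0 < t)
    have hpos : z ^ 2 + t ^ 2 ≠ 0 := by positivity
    refine (((hasDerivAt_pow 2 t).const_add (z ^ 2)).sqrt hpos).hasDerivWithinAt.congr_deriv ?_
    field_simp
    norm_num
  rw [← image_sqrt_sq_add_sq_Ioi z, integral_image_eq_integral_abs_deriv_smul measurableSet_Ioi
    hderiv (injOn_sqrt_sq_add_sq_Ioi z)]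
  refine setIntegral_congr_fun measurableSet_Ioi fun t (ht : 0 < t) => ?_
  have hs : 0 < √(z ^ 2 + t ^ 2) := by positivity
  rw [smul_smul, abs_of_pos (div_pos ht hs), div_mul_cancel₀ _ hs.ne']

theorem integral_complex_comp_sqrt_sq_add_norm_sq (g : ℝ → E) (z : ℝ) :
    ∫ w : ℂ, g √(z ^ 2 + ‖w‖ ^ 2) = (2 * π) • ∫ s in Ioi |z|, s • g s := by
  rw [integral_fun_norm_addHaar volume (fun t => g √(z ^ 2 + t ^ 2)),
    Complex.finrank_real_complex, ← integral_Ioi_smul_comp_sqrt_sq_add_sq]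
  simp [Measure.real, Complex.volume_ball, mul_smul, two_smul]

end Slices

section Cone

variable {E : Type*} [NormedAddCommGroup E] [NormedSpace ℂ E] {φ : ℝ → ℂ} {g : ℝ → E} {C : ℝ}

noncomputable def coneKernel (φ : ℝ → ℂ) (g : ℝ → E) (p : ℝ × ℝ) : E :=
  {p : ℝ × ℝ | |p.1| < p.2}.indicator (fun p => φ p.1 • g p.2) p

theorem coneKernel_eq_indicator_Ioi (φ : ℝ → ℂ) (g : ℝ → E) (z s : ℝ) :
    coneKernel φ g (z, s) = (Ioi |z|).indicator (fun s => φ z • g s) s := by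
  simp [coneKernel, indicator]

theorem coneKernel_eq_indicator_Ioo (φ : ℝ → ℂ) (g : ℝ → E) (z s : ℝ) :
    coneKernel φ g (z, s) = (Ioo (-s) s).indicator (fun z => φ z • g s) z := by
  simp [coneKernel, indicator, abs_lt]

theorem integral_norm_coneKernel_le (hφC : ∀ z, ‖φ z‖ ≤ C) (s : ℝ) :
    ∫ z, ‖coneKernel φ g (z, s)‖ ≤ (Ioi 0).indicator (fun s => 2 * C * ‖s • g s‖) s := by
  simp_rw [coneKernel_eq_indicator_Ioo, norm_indicator_eq_indicator_norm]
  rw [integral_indicator measurableSet_Ioo]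
  rcases le_or_gt s 0 with hs | hs
  · simp [hs]
  · calc ∫ z in Ioo (-s) s, ‖φ z • g s‖
        ≤ C * ‖g s‖ * volume.real (Ioo (-s) s) :=
          (Real.le_norm_self _).trans <| norm_setIntegral_le_of_norm_le_const measure_Ioo_lt_top
            fun z _ => by rw [norm_norm, norm_smul]; gcongr; exact hφC z
      _ = _ := by
          rw [indicator_of_mem (mem_Ioi.2 hs), Real.volume_real_Ioo_of_le (by linarith),
            norm_smul, norm_of_nonneg hs.le]
          ring

theorem integrable_coneKernel (hφ : StronglyMeasurable φ) (hφC : ∀ z, ‖φ z‖ ≤ C)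
    (hg : StronglyMeasurable g) (hint : IntegrableOn (fun s => s • g s) (Ioi 0)) :
    Integrable (coneKernel φ g) (volume.prod volume) := by
  have hmeas : StronglyMeasurable (coneKernel φ g) :=
    ((hφ.comp_measurable measurable_fst).smul (hg.comp_measurable measurable_snd)).indicator
      (isOpen_lt (by fun_prop) continuous_snd).measurableSet
  refine (integrable_prod_iff' hmeas.aestronglyMeasurable).2 ⟨.of_forall fun s => ?_, ?_⟩
  · simp_rw [coneKernel_eq_indicator_Ioo]
    rw [integrable_indicator_iff measurableSet_Ioo]
    refine .of_bound measure_Ioo_lt_top (hφ.smul_const _).aestronglyMeasurable (C * ‖g s‖)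
      (.of_forall fun z => ?_)
    rw [norm_smul]
    exact mul_le_mul_of_nonneg_right (hφC z) (norm_nonneg _)
  · refine (IntegrableOn.integrable_indicator (hint.norm.const_mul (2 * C))
      measurableSet_Ioi).mono' (hmeas.norm.integral_prod_left' (μ := volume)).aestronglyMeasurable
      (.of_forall fun s => ?_)
    rw [norm_of_nonneg (integral_nonneg fun _ => norm_nonneg _)]
    exact integral_norm_coneKernel_le hφC s

theorem integral_smul_integral_Ioi_abs [CompleteSpace E] (hφ : StronglyMeasurable φ)
    (hφC : ∀ z, ‖φ z‖ ≤ C) (hg : StronglyMeasurable g)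
    (hint : IntegrableOn (fun s => s • g s) (Ioi 0)) :
    ∫ z, φ z • ∫ s in Ioi |z|, g s = ∫ s in Ioi 0, (∫ z in Ioo (-s) s, φ z) • g s := by
  calc ∫ z, φ z • ∫ s in Ioi |z|, g s = ∫ z, ∫ s, coneKernel φ g (z, s) := by
        simp_rw [coneKernel_eq_indicator_Ioi, integral_indicator measurableSet_Ioi, integral_smul]
    _ = ∫ s, ∫ z, coneKernel φ g (z, s) :=
        integral_integral_swap (integrable_coneKernel hφ hφC hg hint)
    _ = ∫ s, (Ioi 0).indicator (fun s => (∫ z in Ioo (-s) s, φ z) • g s) s := by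
        congr 1 with s
        simp_rw [coneKernel_eq_indicator_Ioo]
        rw [integral_indicator measurableSet_Ioo, integral_smul_const]
        rcases le_or_gt s 0 with hs | hs
        · simp [hs]
        · rw [indicator_of_mem (mem_Ioi.2 hs)]
    _ = _ := integral_indicator measurableSet_Ioi

end Cone

theorem integral_Ioo_fourierChar {r : ℝ} (hr : r ≠ 0) {s : ℝ} (hs : 0 ≤ s) :
    ∫ z in Ioo (-s) s, (𝐞 (-(z * r)) : ℂ) = ↑(sin (2 * π * r * s) / (π * r)) := by
  set c : ℂ := -(2 * π * r * Complex.I)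
  have hc : c ≠ 0 := by simp [c, hr, pi_ne_zero]
  have hchar : ∀ z : ℝ, (𝐞 (-(z * r)) : ℂ) = Complex.exp (c * z) := fun z => by
    rw [fourierChar_apply]; congr 1; push_cast; ring
  simp_rw [hchar]
  rw [← integral_Ioc_eq_integral_Ioo, ← intervalIntegral.integral_of_le (by linarith),
    integral_exp_mul_complex hc, Complex.ofReal_div, Complex.ofReal_sin, Complex.sin]
  have hπ : (π : ℂ) ≠ 0 := by exact_mod_cast pi_ne_zero
  have hr' : (r : ℂ) ≠ 0 := by exact_mod_cast hr
  simp only [c]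
  push_cast
  field_simp
  ring_nf
  rw [Complex.I_sq]
  ring

section ProdComplex

variable {E : Type*} [NormedAddCommGroup E] [NormedSpace ℂ E] {f : ℝ → E}

theorem finrank_withLp_prod_complex : Module.finrank ℝ (WithLp 2 (ℝ × ℂ)) = 3 := by
  rw [(WithLp.linearEquiv 2 ℝ (ℝ × ℂ)).finrank_eq, Module.finrank_prod]
  simp

theorem fourierChar_smul_norm_toLp (f : ℝ → E) (r : ℝ) (p : ℝ × ℂ) :
    𝐞 (-⟪WithLp.toLp 2 p, WithLp.toLp 2 (r, (0 : ℂ))⟫) • f ‖WithLp.toLp 2 p‖ =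
      𝐞 (-(p.1 * r)) • f √(p.1 ^ 2 + ‖p.2‖ ^ 2) := by
  rw [WithLp.prod_norm_eq_of_L2]
  simp [WithLp.prod_inner_apply, mul_comm]

theorem fourier_norm_comp_withLp_prod_complex_eq_integral (f : ℝ → E) (r : ℝ) :
    𝓕 (fun x : WithLp 2 (ℝ × ℂ) => f ‖x‖) (WithLp.toLp 2 (r, 0)) =
      ∫ p : ℝ × ℂ, 𝐞 (-(p.1 * r)) • f √(p.1 ^ 2 + ‖p.2‖ ^ 2) := by
  rw [Real.fourier_eq, ← (WithLp.volume_preserving_toLp ℝ ℂ).integral_comp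
    (MeasurableEquiv.toLp 2 (ℝ × ℂ)).measurableEmbedding]
  simp_rw [fourierChar_smul_norm_toLp]

theorem integrable_fourierChar_smul_comp_sqrt
    (hint : IntegrableOn (fun s => s ^ 2 • f s) (Ioi 0)) (r : ℝ) :
    Integrable (fun p : ℝ × ℂ => 𝐞 (-(p.1 * r)) • f √(p.1 ^ 2 + ‖p.2‖ ^ 2)) := by
  have hW : Integrable fun x : WithLp 2 (ℝ × ℂ) => 𝐞 (-⟪x, WithLp.toLp 2 (r, 0)⟫) • f ‖x‖ := by
    rw [Real.fourierIntegral_convergent_iff, integrable_fun_norm_addHaar,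
      finrank_withLp_prod_complex]
    exact hint
  have := ((WithLp.volume_preserving_toLp ℝ ℂ).integrable_comp_emb
    (MeasurableEquiv.toLp 2 (ℝ × ℂ)).measurableEmbedding).2 hW
  simpa only [Function.comp_def, MeasurableEquiv.toLp_apply, fourierChar_smul_norm_toLp] using this

theorem fourier_norm_comp_withLp_prod_complex [CompleteSpace E] (hf : StronglyMeasurable f)
    (hint : IntegrableOn (fun s => s ^ 2 • f s) (Ioi 0)) {r : ℝ} (hr : r ≠ 0) :
    𝓕 (fun x : WithLp 2 (ℝ × ℂ) => f ‖x‖) (WithLp.toLp 2 (r, 0)) =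
      (2 / r) • ∫ s in Ioi 0, (s * sin (2 * π * r * s)) • f s := by
  have hchar : StronglyMeasurable fun z : ℝ => (𝐞 (-(z * r)) : ℂ) :=
    (continuous_subtype_val.comp (continuous_fourierChar.comp (by fun_prop))).stronglyMeasurable
  have hint' : IntegrableOn (fun s => s • s • f s) (Ioi 0) := by simpa [smul_smul, sq] using hint
  calc 𝓕 (fun x : WithLp 2 (ℝ × ℂ) => f ‖x‖) (WithLp.toLp 2 (r, 0))
      = ∫ z, ∫ w : ℂ, 𝐞 (-(z * r)) • f √(z ^ 2 + ‖w‖ ^ 2) := by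
        rw [fourier_norm_comp_withLp_prod_complex_eq_integral, Measure.volume_eq_prod,
          integral_prod _ (integrable_fourierChar_smul_comp_sqrt hint r)]
    _ = (2 * π) • ∫ z, (𝐞 (-(z * r)) : ℂ) • ∫ s in Ioi |z|, s • f s := by
        simp_rw [Circle.smul_def, integral_smul, integral_complex_comp_sqrt_sq_add_norm_sq,
          smul_comm _ (2 * π)]
        rw [integral_smul]
    _ = (2 * π) • ∫ s in Ioi 0, (∫ z in Ioo (-s) s, (𝐞 (-(z * r)) : ℂ)) • s • f s := by
        rw [integral_smul_integral_Ioi_abs hchar (fun z => (Circle.norm_coe _).le)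
          (g := fun s => s • f s) (measurable_id.stronglyMeasurable.smul hf) hint']
    _ = (2 / r) • ∫ s in Ioi 0, (s * sin (2 * π * r * s)) • f s := by
        rw [← integral_smul, ← integral_smul]
        refine setIntegral_congr_fun measurableSet_Ioi fun s (hs : 0 < s) => ?_
        rw [integral_Ioo_fourierChar hr hs.le, Complex.coe_smul, smul_smul, smul_smul, smul_smul]
        congr 1
        field_simp

end ProdComplex

/-- Fourier transform of a radial function in ℝ³ (Lemma 3.4): with the convention
`𝓕φ(ξ) = ∫ φ(x) e^{−2πi x·ξ} dx`, if `φ(x) = f(|x|)` is integrable then for `ξ ≠ 0`,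
`𝓕φ(ξ) = (2/|ξ|) ∫_0^∞ f(s) s sin(2π|ξ|s) ds`. -/
theorem stmt_1 (f : ℝ → ℂ) (hf : Measurable f)
    (hint : Integrable (fun x : EuclideanSpace ℝ (Fin 3) => f ‖x‖)) :
    ∀ ξ : EuclideanSpace ℝ (Fin 3), ξ ≠ 0 →
      FourierTransform.fourier (fun x : EuclideanSpace ℝ (Fin 3) => f ‖x‖) ξ =
        ((2 / ‖ξ‖ : ℝ) : ℂ) *
          ∫ s in Set.Ioi (0 : ℝ), f s * (s : ℂ) * (Real.sin (2 * Real.pi * ‖ξ‖ * s) : ℂ) := by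
  intro ξ hξ
  have hint' : IntegrableOn (fun s => s ^ 2 • f s) (Ioi 0) := by
    simpa using (integrable_fun_norm_addHaar volume).1 hint
  rw [fourier_norm_comp_eq (W := WithLp 2 (ℝ × ℂ)) (by simp [finrank_withLp_prod_complex]) f
    (w := WithLp.toLp 2 (‖ξ‖, 0)) (by simp),
    fourier_norm_comp_withLp_prod_complex hf.stronglyMeasurable hint' (norm_ne_zero_iff.2 hξ),
    Complex.real_smul]
  congr 1
  refine setIntegral_congr_fun measurableSet_Ioi fun s _ => ?_
  simp only [Complex.real_smul]
  push_cast
  ring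
end

section
/- Let p > 3, a = 2/(p−1), m = (p−1)/2, and let β > 0 satisfy a + β < 1. Set γ = (1−a)/(1−a + β(p−1)) and β' = γβp. Let w : [1,∞) → ℝ be continuously differentiable and let C > 0 be such that for all r ≥ 1: |w(r)| ≤ C r^{1−a−β} and (∫_{r}^{∞} |w'(s)|^m ds)^{1/m} ≤ C r^{−βp}. Then 0 < γ < 1, β' > β, and for all r ≥ 1: |w(r)| ≤ 2C r^{1−a−β'}. -/
/-!
Split `w(r) = w(r^γ) + (w(r) - w(r^γ))`. The first term is controlled by the pointwise bound at
the smaller radius `r^γ`; the second is `∫_{r^γ}^r w'`, which Hölder's inequality bounds by the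
`Lᵐ` tail of `w'` beyond `r^γ` times `r^{1 - 1/m}`. Since `1/m = a`, the interpolation exponent `γ`
is exactly the one for which both contributions decay like `r^{1-a-β'}`.
-/

open MeasureTheory Set

theorem integral_le_integral_rpow_mul_measureReal_univ {α : Type*} [MeasurableSpace α]
    {μ : Measure α} [IsFiniteMeasure μ] {f : α → ℝ} {m : ℝ} (hm : 1 < m)
    (hf_nonneg : 0 ≤ᵐ[μ] f) (hf : MemLp f (ENNReal.ofReal m) μ) :
    ∫ x, f x ∂μ ≤ (∫ x, f x ^ m ∂μ) ^ (1 / m) * μ.real univ ^ (1 - 1 / m) := by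
  have hmq := Real.HolderConjugate.conjExponent hm
  have holder := integral_mul_le_Lp_mul_Lq_of_nonneg hmq hf_nonneg
    (Filter.Eventually.of_forall fun _ => zero_le_one) hf (memLp_const 1)
  simpa [hmq.one_sub_inv] using holder

theorem abs_sub_le_integral_abs_deriv_rpow {w : ℝ → ℝ} {t r m : ℝ} (htr : t ≤ r) (hm : 1 < m)
    (hdiff : ∀ s ∈ Icc t r, DifferentiableAt ℝ w s) (hcont : ContinuousOn (deriv w) (Icc t r))
    (hint : IntegrableOn (fun s => |deriv w s| ^ m) (Ioi t)) :
    |w r - w t| ≤ (∫ s in Ioi t, |deriv w s| ^ m) ^ (1 / m) * (r - t) ^ (1 - 1 / m) := by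
  have hftc : ∫ s in t..r, deriv w s = w r - w t :=
    intervalIntegral.integral_deriv_eq_sub (fun s hs => hdiff s (uIcc_of_le htr ▸ hs))
      ((uIcc_of_le htr).symm ▸ hcont).intervalIntegrable
  have hmeas : AEStronglyMeasurable (deriv w) (volume.restrict (Ioc t r)) :=
    (hcont.mono Ioc_subset_Icc_self).aestronglyMeasurable measurableSet_Ioc
  have hmem : MemLp (fun s => |deriv w s|) (ENNReal.ofReal m) (volume.restrict (Ioc t r)) := by
    refine ((integrable_norm_rpow_iff hmeas (by simpa using hm.trans_le' zero_le_one)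
      ENNReal.ofReal_ne_top).1 ?_).norm
    simp only [ENNReal.toReal_ofReal (zero_le_one.trans hm.le), Real.norm_eq_abs]
    exact hint.mono_set Ioc_subset_Ioi_self
  calc |w r - w t| = |∫ s in Ioc t r, deriv w s| := by
        rw [← hftc, intervalIntegral.integral_of_le htr]
    _ ≤ ∫ s in Ioc t r, |deriv w s| := abs_integral_le_integral_abs
    _ ≤ (∫ s in Ioc t r, |deriv w s| ^ m) ^ (1 / m) * (r - t) ^ (1 - 1 / m) := by
        simpa [Real.volume_real_Ioc_of_le htr] using
          integral_le_integral_rpow_mul_measureReal_univ hm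
            (Filter.Eventually.of_forall fun _ => abs_nonneg _) hmem
    _ ≤ (∫ s in Ioi t, |deriv w s| ^ m) ^ (1 / m) * (r - t) ^ (1 - 1 / m) := by
        have htail : ∫ s in Ioc t r, |deriv w s| ^ m ≤ ∫ s in Ioi t, |deriv w s| ^ m :=
          setIntegral_mono_set hint (Filter.Eventually.of_forall fun _ => by positivity)
            (Filter.Eventually.of_forall Ioc_subset_Ioi_self)
        gcongr

theorem abs_le_of_rpow_decay_of_integral_deriv_rpow {w : ℝ → ℝ} {C m γ e₁ e₂ : ℝ} (hm : 1 < m)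
    (hγ_pos : 0 < γ) (hγ_le : γ ≤ 1)
    (hdiff : ∀ s ∈ Ici (1 : ℝ), DifferentiableAt ℝ w s) (hcont : ContinuousOn (deriv w) (Ici 1))
    (hint : ∀ r ≥ (1 : ℝ), IntegrableOn (fun s => |deriv w s| ^ m) (Ioi r))
    (hw : ∀ r ≥ (1 : ℝ), |w r| ≤ C * r ^ e₁)
    (hw' : ∀ r ≥ (1 : ℝ), (∫ s in Ioi r, |deriv w s| ^ m) ^ (1 / m) ≤ C * r ^ e₂)
    {r : ℝ} (hr : 1 ≤ r) :
    |w r| ≤ C * r ^ (γ * e₁) + C * r ^ (γ * e₂ + (1 - 1 / m)) := by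
  set t := r ^ γ
  have ht : 1 ≤ t := Real.one_le_rpow hr hγ_pos.le
  have htr : t ≤ r := by simpa using Real.rpow_le_rpow_of_exponent_le hr hγ_le
  have ht_rpow (e : ℝ) : t ^ e = r ^ (γ * e) := (Real.rpow_mul (by linarith) γ e).symm
  have hosc := abs_sub_le_integral_abs_deriv_rpow htr hm (fun s hs => hdiff s (ht.trans hs.1))
    (hcont.mono fun s hs => ht.trans hs.1) (hint t ht)
  have hconj_nonneg : 0 ≤ 1 - 1 / m := by
    rw [sub_nonneg, div_le_one (by linarith)]; exact hm.le
  have hlength : (r - t) ^ (1 - 1 / m) ≤ r ^ (1 - 1 / m) :=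
    Real.rpow_le_rpow (sub_nonneg.2 htr) (by linarith) hconj_nonneg
  calc |w r| ≤ |w t| + |w r - w t| := by linarith [abs_sub_abs_le_abs_sub (w r) (w t)]
    _ ≤ C * t ^ e₁ + C * t ^ e₂ * r ^ (1 - 1 / m) := by
        gcongr
        · exact hw t ht
        · exact hosc.trans (mul_le_mul_of_nonneg (hw' t ht) hlength (by positivity) (by positivity))
    _ = C * r ^ (γ * e₁) + C * r ^ (γ * e₂ + (1 - 1 / m)) := by
        rw [ht_rpow, ht_rpow, mul_assoc, Real.rpow_add (by linarith)]

section InterpolationExponent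

variable {a β γ p : ℝ}

theorem interpolationExponent_pos (hp : 1 < p) (hβ : 0 < β) (ha : a < 1)
    (hγ : γ = (1 - a) / (1 - a + β * (p - 1))) : 0 < γ := by
  rw [hγ]; apply div_pos <;> nlinarith

theorem interpolationExponent_lt_one (hp : 1 < p) (hβ : 0 < β) (ha : a < 1)
    (hγ : γ = (1 - a) / (1 - a + β * (p - 1))) : γ < 1 := by
  rw [hγ, div_lt_one (by nlinarith)]; nlinarith

theorem interpolationExponent_mul_denom (hp : 1 < p) (hβ : 0 < β) (ha : a < 1)
    (hγ : γ = (1 - a) / (1 - a + β * (p - 1))) : γ * (1 - a + β * (p - 1)) = 1 - a := by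
  rw [hγ, div_mul_cancel₀]; nlinarith

theorem lt_interpolationExponent_mul (hp : 1 < p) (hβ : 0 < β) (hab : a + β < 1)
    (hγ : γ = (1 - a) / (1 - a + β * (p - 1))) : β < γ * β * p := by
  have hdenom : 0 < 1 - a + β * (p - 1) := by nlinarith
  rw [hγ, div_mul_eq_mul_div, div_mul_eq_mul_div, lt_div_iff₀ hdenom]
  nlinarith [mul_pos (mul_pos hβ (sub_pos.2 hp)) (sub_pos.2 hab)]

end InterpolationExponent

theorem stmt_8_general (p : ℝ) (hp : 3 < p) (a m β γ β' : ℝ)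
    (ha : a = 2 / (p - 1)) (hm : m = (p - 1) / 2) (hβ : 0 < β) (hab : a + β < 1)
    (hγ : γ = (1 - a) / (1 - a + β * (p - 1))) (hβ' : β' = γ * β * p)
    (w : ℝ → ℝ)
    (hwdiff : ∀ s ∈ Set.Ici (1 : ℝ), DifferentiableAt ℝ w s)
    (hwcont : ContinuousOn (deriv w) (Set.Ici (1 : ℝ)))
    (C : ℝ)
    (hint : ∀ r ≥ (1 : ℝ), IntegrableOn (fun s => |deriv w s| ^ m) (Set.Ioi r))
    (h1 : ∀ r ≥ (1 : ℝ), |w r| ≤ C * r ^ (1 - a - β))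
    (h2 : ∀ r ≥ (1 : ℝ), (∫ s in Set.Ioi r, |deriv w s| ^ m) ^ (1 / m) ≤ C * r ^ (-(β * p))) :
    0 < γ ∧ γ < 1 ∧ β < β' ∧ ∀ r ≥ (1 : ℝ), |w r| ≤ 2 * C * r ^ (1 - a - β') := by
  have hm1 : 1 < m := by rw [hm]; linarith
  have ha1 : a < 1 := by rw [ha, div_lt_one (by linarith)]; linarith
  have hp1 : 1 < p := by linarith
  have hγ_pos := interpolationExponent_pos hp1 hβ ha1 hγ
  have hγ_lt := interpolationExponent_lt_one hp1 hβ ha1 hγ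
  refine ⟨hγ_pos, hγ_lt, hβ' ▸ lt_interpolationExponent_mul hp1 hβ hab hγ, fun r hr => ?_⟩
  have hbound := abs_le_of_rpow_decay_of_integral_deriv_rpow hm1 hγ_pos hγ_lt.le
    hwdiff hwcont hint h1 h2 hr
  have hdenom := interpolationExponent_mul_denom hp1 hβ ha1 hγ
  have hinv_m : 1 / m = a := by rw [hm, ha, one_div_div]
  have he₁ : γ * (1 - a - β) = 1 - a - β' := by rw [hβ']; linear_combination hdenom
  have he₂ : γ * -(β * p) + (1 - 1 / m) = 1 - a - β' := by rw [hβ', hinv_m]; ring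
  rw [he₁, he₂] at hbound
  linarith

/-- The improvement step in the iteration concluding the proof of Theorem 3.2:
with `p > 3`, `a = 2/(p−1)`, `m = (p−1)/2`, `β > 0`, `a + β < 1`,
`γ = (1−a)/(1−a+β(p−1))` and `β' = γβp`, if `w` is C¹ on `[1,∞)` with
`|w(r)| ≤ C r^(1−a−β)` and `(∫_r^∞ |w'|^m)^(1/m) ≤ C r^(−βp)` for `r ≥ 1`, then
`0 < γ < 1`, `β' > β`, and `|w(r)| ≤ 2C r^(1−a−β')` for `r ≥ 1`. -/
theorem stmt_8 (p : ℝ) (hp : 3 < p) (a m β γ β' : ℝ)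
    (ha : a = 2 / (p - 1)) (hm : m = (p - 1) / 2) (hβ : 0 < β) (hab : a + β < 1)
    (hγ : γ = (1 - a) / (1 - a + β * (p - 1))) (hβ' : β' = γ * β * p)
    (w : ℝ → ℝ)
    (hwdiff : ∀ s ∈ Set.Ici (1 : ℝ), DifferentiableAt ℝ w s)
    (hwcont : ContinuousOn (deriv w) (Set.Ici (1 : ℝ)))
    (C : ℝ) (hC : 0 < C)
    (hint : ∀ r ≥ (1 : ℝ), IntegrableOn (fun s => |deriv w s| ^ m) (Set.Ioi r))
    (h1 : ∀ r ≥ (1 : ℝ), |w r| ≤ C * r ^ (1 - a - β))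
    (h2 : ∀ r ≥ (1 : ℝ), (∫ s in Set.Ioi r, |deriv w s| ^ m) ^ (1 / m) ≤ C * r ^ (-(β * p))) :
    0 < γ ∧ γ < 1 ∧ β < β' ∧ ∀ r ≥ (1 : ℝ), |w r| ≤ 2 * C * r ^ (1 - a - β') :=
  stmt_8_general p hp a m β γ β' ha hm hβ hab hγ hβ' w hwdiff hwcont C hint h1 h2
end

section
/- Let p ≥ 1, let I ⊆ ℝ be an open interval, let R > 0, and let u : ℝ³ × I → ℝ be twice continuously differentiable, satisfy ∂_t² u = Δu − |u|^{p−1}u on ℝ³ × I (Δ the Laplacian in the space variable), and suppose u(·,t) vanishes outside the ball {|x| ≤ R} for every t ∈ I. Then for every t ∈ I, the function t ↦ ∫_{ℝ³} (x·∇u(x,t)) ∂_t u(x,t) dx is differentiable, with derivative −(3/2)∫_{ℝ³} (∂_t u)² dx + (1/2)∫_{ℝ³} |∇u|² dx + (3/(p+1))∫_{ℝ³} |u|^{p+1} dx. -/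
open MeasureTheory

/-- The `i`-th partial derivative in the space variable. -/
noncomputable def pder (v : (Fin 3 → ℝ) → ℝ) (i : Fin 3) (x : Fin 3 → ℝ) : ℝ :=
  deriv (fun s => v (Function.update x i s)) (x i)

/-- The Laplacian in the space variable: the sum of the three second partial
derivatives. -/
noncomputable def lap (v : (Fin 3 → ℝ) → ℝ) (x : Fin 3 → ℝ) : ℝ :=
  ∑ i, deriv (fun s => deriv (fun s' => v (Function.update x i s')) s) (x i)

/-!
Write `D` for the space-time derivative of `(x, t) ↦ u x t`. The integrand and its `t`-derivative
are continuous and vanish outside a fixed ball, so one may differentiate under the integral sign;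
the symmetry of `D²` turns `∂ₜ(x·∇u)` into `x·∇(∂ₜu)`, and the equation replaces `∂ₜ²u`.
Each resulting term is an integration by parts against the radial field `x`, based on
`∫ Df(x) x dx = -n ∫ f` for compactly supported `C¹` functions `f` on `ℝⁿ`:
applied to `(∂ₜu)²` and `|u|^(p+1)` it gives the first and last terms, and applied to `(∂ⱼu)²`
after one more integration by parts in the direction `eⱼ` it gives `(n/2 - 1) ∫ |∇u|²`.
-/

open Module Set Function Topology

section Virial

variable {E : Type*} [NormedAddCommGroup E] [NormedSpace ℝ E] {f : E → ℝ}

theorem HasCompactSupport.fderiv_apply_self (hf : HasCompactSupport f) :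
    HasCompactSupport fun x => fderiv ℝ f x x :=
  (hf.fderiv (𝕜 := ℝ)).mono fun x hx h0 => hx (by simp [h0])

variable [MeasurableSpace E] [BorelSpace E] {μ : Measure E}

theorem integrable_fderiv_apply_self_mul [IsFiniteMeasureOnCompacts μ] (hf : ContDiff ℝ 1 f)
    (hfc : HasCompactSupport f) {g : E → ℝ} (hg : Continuous g) :
    Integrable (fun x => fderiv ℝ f x x * g x) μ :=
  (((hf.continuous_fderiv one_ne_zero).clm_apply continuous_id).mul
    hg).integrable_of_hasCompactSupport hfc.fderiv_apply_self.mul_right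

variable [FiniteDimensional ℝ E] [μ.IsAddHaarMeasure]

theorem integral_fderiv_apply_self (hf : ContDiff ℝ 1 f) (hfc : HasCompactSupport f) :
    ∫ x, fderiv ℝ f x x ∂μ = -finrank ℝ E * ∫ x, f x ∂μ := by
  -- in the coordinates `cᵢ` of a basis, `Df(x) x = ∑ cᵢ(x) ∂ᵢf(x)` and `∫ cᵢ ∂ᵢf = -∫ f`
  set b := finBasis ℝ E
  set c : Fin (finrank ℝ E) → E →L[ℝ] ℝ := fun i => LinearMap.toContinuousLinearMap (b.coord i)
  have hsplit : ∀ x, fderiv ℝ f x x = ∑ i, c i x * fderiv ℝ f x (b i) := fun x => by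
    calc fderiv ℝ f x x = fderiv ℝ f x (∑ i, b.repr x i • b i) := by rw [b.sum_repr]
      _ = _ := by rw [map_sum]; simp [c]
  have hint : ∀ i, Integrable (fun x => c i x * fderiv ℝ f x (b i)) μ := fun i =>
    ((c i).continuous.mul ((hf.continuous_fderiv one_ne_zero).clm_apply
      continuous_const)).integrable_of_hasCompactSupport (hfc.fderiv_apply ℝ (b i)).mul_left
  have hibp : ∀ i, ∫ x, c i x * fderiv ℝ f x (b i) ∂μ = -∫ x, f x ∂μ := fun i => by
    have hfi := hf.continuous.integrable_of_hasCompactSupport (μ := μ) hfc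
    rw [integral_mul_fderiv_eq_neg_fderiv_mul_of_integrable _ (hint i) _
      (fun x _ => (c i).differentiableAt) (fun x _ => hf.differentiable one_ne_zero x)]
    · simp only [(c i).fderiv]; simp [c]
    · simp only [(c i).fderiv]; simpa [c] using hfi
    · exact ((c i).continuous.mul hf.continuous).integrable_of_hasCompactSupport hfc.mul_left
  rw [integral_congr_ae (ae_of_all _ hsplit), integral_finsetSum _ fun i _ => hint i,
    Finset.sum_congr rfl fun i _ => hibp i]
  simp

theorem integral_fderiv_apply_self_mul_deriv_comp (hf : ContDiff ℝ 1 f) (hfc : HasCompactSupport f)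
    {g : ℝ → ℝ} (hg : ContDiff ℝ 1 g) (hg0 : g 0 = 0) :
    ∫ x, fderiv ℝ f x x * deriv g (f x) ∂μ = -finrank ℝ E * ∫ x, g (f x) ∂μ := by
  have hchain : ∀ x, fderiv ℝ (g ∘ f) x x = fderiv ℝ f x x * deriv g (f x) := fun x => by
    rw [((hg.differentiable one_ne_zero (f x)).hasDerivAt.comp_hasFDerivAt x
      (hf.differentiable one_ne_zero x).hasFDerivAt).fderiv]
    simp [mul_comm]
  simp_rw [← hchain]
  exact integral_fderiv_apply_self (hg.comp hf) (hfc.comp_left hg0)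

theorem integral_fderiv_apply_self_mul_self (hf : ContDiff ℝ 1 f) (hfc : HasCompactSupport f) :
    ∫ x, fderiv ℝ f x x * f x ∂μ = -(finrank ℝ E / 2) * ∫ x, f x ^ 2 ∂μ := by
  have h := integral_fderiv_apply_self_mul_deriv_comp (μ := μ) hf hfc (g := fun s => s ^ 2)
    (contDiff_id.pow 2) (zero_pow two_ne_zero)
  have hd : ∀ s : ℝ, deriv (fun s => s ^ 2) s = 2 * s := fun s => by simp
  simp only [hd, mul_left_comm _ (2 : ℝ), integral_const_mul] at h
  linarith

theorem integral_fderiv_apply_self_mul_abs_rpow (hf : ContDiff ℝ 1 f) (hfc : HasCompactSupport f)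
    {q : ℝ} (hq : 1 < q) :
    ∫ x, fderiv ℝ f x x * (|f x| ^ (q - 2) * f x) ∂μ = -(finrank ℝ E / q) * ∫ x, |f x| ^ q ∂μ := by
  have hq0 : q ≠ 0 := (zero_lt_one.trans hq).ne'
  have h := integral_fderiv_apply_self_mul_deriv_comp (μ := μ) hf hfc
    (by simpa using contDiff_norm_rpow (E := ℝ) hq) (by simp [hq0])
  simp only [fun s => (hasDerivAt_abs_rpow s hq).deriv, mul_assoc, mul_left_comm _ q,
    integral_const_mul] at h
  calc _ = q * (∫ x, fderiv ℝ f x x * (|f x| ^ (q - 2) * f x) ∂μ) / q := by field_simp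
    _ = _ := by rw [h]; ring

theorem integral_fderiv_apply_self_mul_fderiv_fderiv (hf : ContDiff ℝ 2 f)
    (hfc : HasCompactSupport f) (v : E) :
    ∫ x, fderiv ℝ f x x * fderiv ℝ (fderiv ℝ f) x v v ∂μ
      = (finrank ℝ E / 2 - 1) * ∫ x, fderiv ℝ f x v ^ 2 ∂μ := by
  -- by symmetry of `D²f`, `∂ᵥ (Df(x) x) = D(∂ᵥf)(x) x + ∂ᵥf(x)`: integrate by parts in the
  -- direction `v`, then apply `integral_fderiv_apply_self_mul_self` to `∂ᵥf`
  set P := fun y => fderiv ℝ f y v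
  set A := fun y => fderiv ℝ f y y
  have hDf : ContDiff ℝ 1 (fderiv ℝ f) := hf.fderiv_right le_rfl
  have hD2 : Differentiable ℝ (fderiv ℝ f) := hDf.differentiable one_ne_zero
  have hP : ContDiff ℝ 1 P := hDf.clm_apply contDiff_const
  have hPc : HasCompactSupport P := hfc.fderiv_apply ℝ v
  have hA : ContDiff ℝ 1 A := hDf.clm_apply contDiff_id
  have hPd : ∀ x w, fderiv ℝ P x w = fderiv ℝ (fderiv ℝ f) x w v := fun x w => by
    simp [P, fderiv_clm_apply (hD2 x) (differentiableAt_const v)]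
  have hAd : ∀ x, fderiv ℝ A x v = fderiv ℝ P x x + P x := fun x => by
    rw [show A = fun y => fderiv ℝ f y y from rfl,
      fderiv_clm_apply (u := fun y => y) (hD2 x) differentiableAt_fun_id, hPd,
      (hf.contDiffAt.isSymmSndFDerivAt (by simp)).eq]
    simp [P, add_comm]
  have hPsq : Integrable (fun x => P x ^ 2) μ :=
    (hP.continuous.pow 2).integrable_of_hasCompactSupport (hPc.comp_left (zero_pow two_ne_zero))
  have hPP : Integrable (fun x => fderiv ℝ P x x * P x) μ :=
    integrable_fderiv_apply_self_mul hP hPc hP.continuous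
  have hibp := integral_mul_fderiv_eq_neg_fderiv_mul_of_integrable (μ := μ) (v := v)
    (((hA.continuous_fderiv one_ne_zero).clm_apply continuous_const).mul
      hP.continuous |>.integrable_of_hasCompactSupport hPc.mul_left)
    (integrable_fderiv_apply_self_mul (hf.of_le (by norm_num)) hfc
      ((hP.continuous_fderiv one_ne_zero).clm_apply continuous_const))
    ((hA.continuous.mul hP.continuous).integrable_of_hasCompactSupport hPc.mul_left)
    (fun x _ => hA.differentiable one_ne_zero x) (fun x _ => hP.differentiable one_ne_zero x)
  simp only [hAd, add_mul, ← sq] at hibp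
  simp only [← hPd]
  rw [hibp, integral_add hPP hPsq, integral_fderiv_apply_self_mul_self hP hPc]
  ring

theorem integral_virial {ι : Type*} [Fintype ι] (b : ι → E) {φ v : E → ℝ}
    (hφ : ContDiff ℝ 2 φ) (hφc : HasCompactSupport φ) (hv : ContDiff ℝ 1 v)
    (hvc : HasCompactSupport v) {q : ℝ} (hq : 1 < q) :
    ∫ x, (fderiv ℝ v x x * v x + fderiv ℝ φ x x
        * (∑ i, fderiv ℝ (fderiv ℝ φ) x (b i) (b i) - |φ x| ^ (q - 2) * φ x)) ∂μ
      = -(finrank ℝ E / 2) * ∫ x, v x ^ 2 ∂μ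
        + (finrank ℝ E / 2 - 1) * ∫ x, ∑ i, fderiv ℝ φ x (b i) ^ 2 ∂μ
        + (finrank ℝ E / q) * ∫ x, |φ x| ^ q ∂μ := by
  have hφ1 : ContDiff ℝ 1 φ := hφ.of_le (by norm_num)
  have hD2 : Continuous (fderiv ℝ (fderiv ℝ φ)) :=
    (hφ.fderiv_right (by norm_num : (1 : WithTop ℕ∞) + 1 ≤ 2)).continuous_fderiv one_ne_zero
  -- for `q < 2` the factor `|s| ^ (q - 2)` blows up at `0`, but the product is `q⁻¹ (|s| ^ q)'`
  have hpow : Continuous fun s : ℝ => |s| ^ (q - 2) * s := by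
    have h := (contDiff_norm_rpow (E := ℝ) hq).continuous_deriv le_rfl
    simp only [Real.norm_eq_abs] at h
    rw [funext fun s => (hasDerivAt_abs_rpow s hq).deriv] at h
    convert h.const_mul q⁻¹ using 2 with s
    field_simp [(zero_lt_one.trans hq).ne']
  have hlap : ∀ i, Integrable (fun x => fderiv ℝ φ x x * fderiv ℝ (fderiv ℝ φ) x (b i) (b i)) μ :=
    fun i => integrable_fderiv_apply_self_mul hφ1 hφc
      ((hD2.clm_apply continuous_const).clm_apply continuous_const)
  have hsq : ∀ i, Integrable (fun x => fderiv ℝ φ x (b i) ^ 2) μ := fun i => by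
    have hc : Continuous fun x => fderiv ℝ φ x (b i) :=
      (hφ1.continuous_fderiv one_ne_zero).clm_apply continuous_const
    have hs : HasCompactSupport fun x => fderiv ℝ φ x (b i) ^ 2 :=
      (hφc.fderiv_apply ℝ (b i)).comp_left (g := fun y : ℝ => y ^ 2) (zero_pow two_ne_zero)
    exact (hc.pow 2).integrable_of_hasCompactSupport hs
  have hlapsum : Integrable
      (fun x => ∑ i, fderiv ℝ φ x x * fderiv ℝ (fderiv ℝ φ) x (b i) (b i)) μ :=
    integrable_finsetSum _ fun i _ => hlap i
  have hnonlin : Integrable (fun x => fderiv ℝ φ x x * (|φ x| ^ (q - 2) * φ x)) μ :=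
    integrable_fderiv_apply_self_mul hφ1 hφc (hpow.comp hφ1.continuous)
  have hφpart : Integrable (fun x => ∑ i, fderiv ℝ φ x x * fderiv ℝ (fderiv ℝ φ) x (b i) (b i)
      - fderiv ℝ φ x x * (|φ x| ^ (q - 2) * φ x)) μ := hlapsum.sub hnonlin
  simp only [mul_sub, Finset.mul_sum]
  rw [integral_add (integrable_fderiv_apply_self_mul hv hvc hv.continuous) hφpart,
    integral_sub hlapsum hnonlin, integral_finsetSum _ fun i _ => hlap i,
    integral_finsetSum _ fun i _ => hsq i, integral_fderiv_apply_self_mul_self hv hvc,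
    integral_fderiv_apply_self_mul_abs_rpow hφ1 hφc hq]
  simp only [integral_fderiv_apply_self_mul_fderiv_fderiv hφ hφc, Finset.mul_sum]
  ring

end Virial

section ParametricIntegral

variable {E : Type*} [TopologicalSpace E] [T2Space E] [MeasurableSpace E] [OpensMeasurableSpace E]
  {μ : Measure E} [IsFiniteMeasureOnCompacts μ]

theorem hasDerivAt_integral_of_continuousOn_of_isCompact {F F' : E → ℝ → ℝ} {I : Set ℝ}
    {K : Set E} {t : ℝ} (hI : IsOpen I) (ht : t ∈ I) (hK : IsCompact K)
    (hF : ∀ τ ∈ I, Continuous (F · τ)) (hF' : ContinuousOn (uncurry F') (univ ×ˢ I))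
    (hFK : ∀ x ∉ K, F x t = 0) (hF'K : ∀ τ ∈ I, ∀ x ∉ K, F' x τ = 0)
    (hFF' : ∀ x, ∀ τ ∈ I, HasDerivAt (F x) (F' x τ) τ) :
    HasDerivAt (fun τ => ∫ x, F x τ ∂μ) (∫ x, F' x t ∂μ) t := by
  obtain ⟨δ, hδ, hδI⟩ := Metric.nhds_basis_closedBall.mem_iff.1 (hI.mem_nhds ht)
  have hball : Metric.ball t δ ⊆ I := Metric.ball_subset_closedBall.trans hδI
  obtain ⟨C, hC⟩ := (hK.prod (isCompact_closedBall t δ)).exists_bound_of_continuousOn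
    (hF'.mono (prod_mono (subset_univ K) hδI))
  have hbound : ∀ x, ∀ τ ∈ Metric.ball t δ, ‖F' x τ‖ ≤ K.indicator (fun _ => C) x := by
    intro x τ hτ
    by_cases hx : x ∈ K
    · rw [indicator_of_mem hx]
      exact hC (x, τ) ⟨hx, Metric.ball_subset_closedBall hτ⟩
    · rw [indicator_of_notMem hx, hF'K τ (hball hτ) x hx, norm_zero]
  refine (hasDerivAt_integral_of_dominated_loc_of_deriv_le (Metric.ball_mem_nhds t hδ) ?_
    ((hF t ht).integrable_of_hasCompactSupport (HasCompactSupport.intro hK hFK))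
    (hF'.comp_continuous (continuous_id.prodMk continuous_const)
      fun _ => ⟨trivial, ht⟩).aestronglyMeasurable
    (ae_of_all _ hbound)
    ((integrable_indicator_iff hK.measurableSet).2 (integrableOn_const hK.measure_lt_top.ne))
    (ae_of_all _ fun x τ hτ => hFF' x τ (hball hτ))).2
  filter_upwards [hI.mem_nhds ht] with τ hτ using (hF τ hτ).aestronglyMeasurable

end ParametricIntegral

section PartialDerivatives

variable {E G : Type*} [NormedAddCommGroup E] [NormedSpace ℝ E] [NormedAddCommGroup G]
  [NormedSpace ℝ G] {u : E → ℝ → G} {L : E × ℝ →L[ℝ] G} {x : E} {τ : ℝ}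

theorem hasDerivAt_of_hasFDerivAt_uncurry (h : HasFDerivAt (uncurry u) L (x, τ)) :
    HasDerivAt (u x) (L (0, 1)) τ :=
  h.comp_hasDerivAt τ ((hasDerivAt_const τ x).prodMk (hasDerivAt_id τ))

theorem hasFDerivAt_of_hasFDerivAt_uncurry (h : HasFDerivAt (uncurry u) L (x, τ)) :
    HasFDerivAt (u · τ) (L.comp (.inl ℝ E ℝ)) x :=
  h.comp (g := uncurry u) x (hasFDerivAt_prodMk_left (𝕜 := ℝ) x τ)

theorem eqOn_fderiv_zero {f : E → G} {U : Set E} (hU : IsOpen U) (hf : EqOn f 0 U) :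
    EqOn (fderiv ℝ f) 0 U := fun y hy => by
  rw [(Filter.eventuallyEq_of_mem (hU.mem_nhds hy) hf).fderiv_eq]
  simp

theorem contDiff_of_contDiffOn_uncurry {n : WithTop ℕ∞} {I : Set ℝ}
    (hu : ContDiffOn ℝ n (uncurry u) (univ ×ˢ I)) (hτ : τ ∈ I) : ContDiff ℝ n (u · τ) := by
  rw [← contDiffOn_univ]
  exact hu.comp (contDiff_id.prodMk contDiff_const).contDiffOn fun y _ => ⟨trivial, hτ⟩

end PartialDerivatives

theorem hasCompactSupport_deriv {E G : Type*} [TopologicalSpace E] [R1Space E]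
    [NormedAddCommGroup G] [NormedSpace ℝ G] {u : E → ℝ → G} {I : Set ℝ} {K : Set E} {τ : ℝ}
    (hI : IsOpen I) (hK : IsCompact K) (hsupp : ∀ σ ∈ I, ∀ x ∉ K, u x σ = 0) (hτ : τ ∈ I) :
    HasCompactSupport fun y => deriv (u y) τ :=
  HasCompactSupport.intro hK fun x hx => by
    rw [(Filter.eventuallyEq_of_mem (hI.mem_nhds hτ) fun σ hσ => hsupp σ hσ x hx).deriv_eq]
    exact deriv_const τ 0

section SpaceTime

variable {E : Type*} [NormedAddCommGroup E] [NormedSpace ℝ E] {u : E → ℝ → ℝ} {I : Set ℝ}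
  {x : E} {τ t : ℝ}

local notation "D" => fderiv ℝ (uncurry u)

theorem hasFDerivAt_uncurry (hI : IsOpen I) (hu : ContDiffOn ℝ 2 (uncurry u) (univ ×ˢ I))
    (hτ : τ ∈ I) : HasFDerivAt (uncurry u) (D (x, τ)) (x, τ) :=
  ((hu.differentiableOn (by norm_num)).differentiableAt
    ((isOpen_univ.prod hI).mem_nhds ⟨trivial, hτ⟩)).hasFDerivAt

theorem hasFDerivAt_fderiv_uncurry (hI : IsOpen I) (hu : ContDiffOn ℝ 2 (uncurry u) (univ ×ˢ I))
    (hτ : τ ∈ I) : HasFDerivAt D (fderiv ℝ D (x, τ)) (x, τ) :=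
  (((hu.fderiv_of_isOpen (isOpen_univ.prod hI) (by norm_num : (1 : WithTop ℕ∞) + 1 ≤ 2)
    ).differentiableOn one_ne_zero).differentiableAt
    ((isOpen_univ.prod hI).mem_nhds ⟨trivial, hτ⟩)).hasFDerivAt

theorem deriv_eq_fderiv_uncurry (hI : IsOpen I) (hu : ContDiffOn ℝ 2 (uncurry u) (univ ×ˢ I))
    (hτ : τ ∈ I) : deriv (u x) τ = D (x, τ) (0, 1) :=
  (hasDerivAt_of_hasFDerivAt_uncurry (hasFDerivAt_uncurry hI hu hτ)).deriv

theorem fderiv_eq_fderiv_uncurry (hI : IsOpen I) (hu : ContDiffOn ℝ 2 (uncurry u) (univ ×ˢ I))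
    (hτ : τ ∈ I) (v : E) : fderiv ℝ (u · τ) x v = D (x, τ) (v, 0) := by
  rw [(hasFDerivAt_of_hasFDerivAt_uncurry (hasFDerivAt_uncurry hI hu hτ)).fderiv]
  simp

theorem hasFDerivAt_fderiv_uncurry_apply (hI : IsOpen I)
    (hu : ContDiffOn ℝ 2 (uncurry u) (univ ×ˢ I)) (hτ : τ ∈ I) (w : E × ℝ) :
    HasFDerivAt (fun q => D q w)
      ((ContinuousLinearMap.apply ℝ ℝ w).comp (fderiv ℝ D (x, τ))) (x, τ) :=
  (ContinuousLinearMap.apply ℝ ℝ w).hasFDerivAt.comp (g := ContinuousLinearMap.apply ℝ ℝ w) _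
    (hasFDerivAt_fderiv_uncurry hI hu hτ)

theorem deriv_deriv_eq_fderiv_fderiv_uncurry (hI : IsOpen I)
    (hu : ContDiffOn ℝ 2 (uncurry u) (univ ×ˢ I)) (ht : t ∈ I) :
    deriv (deriv (u x)) t = fderiv ℝ D (x, t) (0, 1) (0, 1) := by
  have h : deriv (u x) =ᶠ[𝓝 t] fun σ => D (x, σ) (0, 1) := by
    filter_upwards [hI.mem_nhds ht] with σ hσ using deriv_eq_fderiv_uncurry hI hu hσ
  rw [h.deriv_eq, (hasDerivAt_of_hasFDerivAt_uncurry (u := fun y σ => D (y, σ) (0, 1))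
    (hasFDerivAt_fderiv_uncurry_apply hI hu ht _)).deriv]
  simp

theorem fderiv_deriv_eq_fderiv_fderiv_uncurry (hI : IsOpen I)
    (hu : ContDiffOn ℝ 2 (uncurry u) (univ ×ˢ I)) (ht : t ∈ I) (v : E) :
    fderiv ℝ (fun y => deriv (u y) t) x v = fderiv ℝ D (x, t) (0, 1) (v, 0) := by
  rw [funext fun y => deriv_eq_fderiv_uncurry hI hu ht, (hasFDerivAt_of_hasFDerivAt_uncurry
    (u := fun y σ => D (y, σ) (0, 1)) (hasFDerivAt_fderiv_uncurry_apply hI hu ht _)).fderiv]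
  simpa using ((hu.contDiffAt ((isOpen_univ.prod hI).mem_nhds ⟨trivial, ht⟩)).isSymmSndFDerivAt
    (by simp)).eq (v, 0) (0, 1)

theorem contDiff_deriv_of_contDiffOn_uncurry (hI : IsOpen I)
    (hu : ContDiffOn ℝ 2 (uncurry u) (univ ×ˢ I)) (ht : t ∈ I) :
    ContDiff ℝ 1 fun y => deriv (u y) t := by
  rw [funext fun y => deriv_eq_fderiv_uncurry hI hu ht]
  exact contDiff_of_contDiffOn_uncurry (u := fun y σ => D (y, σ) (0, 1))
    ((hu.fderiv_of_isOpen (isOpen_univ.prod hI) le_rfl).clm_apply contDiffOn_const) ht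

theorem hasDerivAt_integral_fderiv_apply_self_mul_deriv [MeasurableSpace E] [BorelSpace E]
    {μ : Measure E} [IsFiniteMeasureOnCompacts μ] {K : Set E} (hI : IsOpen I)
    (hu : ContDiffOn ℝ 2 (uncurry u) (univ ×ˢ I)) (hK : IsCompact K)
    (hsupp : ∀ τ ∈ I, ∀ x ∉ K, u x τ = 0) (ht : t ∈ I) :
    HasDerivAt (fun τ => ∫ x : E, fderiv ℝ (u · τ) x x * deriv (u x) τ ∂μ)
      (∫ x : E, fderiv ℝ (fun y => deriv (u y) t) x x * deriv (u x) t
        + fderiv ℝ (u · t) x x * deriv (deriv (u x)) t ∂μ) t := by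
  have hΩ : IsOpen (univ ×ˢ I : Set (E × ℝ)) := isOpen_univ.prod hI
  have hD : ContDiffOn ℝ 1 D (univ ×ˢ I) := hu.fderiv_of_isOpen hΩ (by norm_num)
  have hDc : ContinuousOn D (univ ×ˢ I) := hD.continuousOn
  have hD2c : ContinuousOn (fderiv ℝ D) (univ ×ˢ I) := hD.continuousOn_fderiv_of_isOpen hΩ le_rfl
  have hU : IsOpen (Kᶜ ×ˢ I) := hK.isClosed.isOpen_compl.prod hI
  have hD0 : EqOn D 0 (Kᶜ ×ˢ I) := eqOn_fderiv_zero hU fun q hq => hsupp q.2 hq.2 q.1 hq.1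
  have hD20 : EqOn (fderiv ℝ D) 0 (Kᶜ ×ˢ I) := eqOn_fderiv_zero hU hD0
  refine ((hasDerivAt_integral_of_continuousOn_of_isCompact (μ := μ)
    (F := fun x τ => D (x, τ) (x, 0) * D (x, τ) (0, 1))
    (F' := fun x τ => fderiv ℝ D (x, τ) (0, 1) (x, 0) * D (x, τ) (0, 1)
      + D (x, τ) (x, 0) * fderiv ℝ D (x, τ) (0, 1) (0, 1))
    hI ht hK ?_ ?_ ?_ ?_ ?_).congr_of_eventuallyEq ?_).congr_deriv ?_
  · intro τ hτ
    have hDτ : Continuous fun x => D (x, τ) :=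
      hDc.comp_continuous (continuous_id.prodMk continuous_const) fun x => ⟨trivial, hτ⟩
    exact (hDτ.clm_apply (continuous_id.prodMk continuous_const)).mul
      (hDτ.clm_apply continuous_const)
  · have hx0 : ContinuousOn (fun q : E × ℝ => (q.1, (0 : ℝ))) (univ ×ˢ I) :=
      (continuous_fst.prodMk continuous_const).continuousOn
    exact (((hD2c.clm_apply continuousOn_const).clm_apply hx0).mul
      (hDc.clm_apply continuousOn_const)).add ((hDc.clm_apply hx0).mul
      ((hD2c.clm_apply continuousOn_const).clm_apply continuousOn_const))
  · intro x hx
    simp [hD0 (mk_mem_prod hx ht)]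
  · intro τ hτ x hx
    simp [hD0 (mk_mem_prod hx hτ), hD20 (mk_mem_prod hx hτ)]
  · intro x τ hτ
    have hDt := hasDerivAt_of_hasFDerivAt_uncurry (u := fun y σ => D (y, σ))
      (hasFDerivAt_fderiv_uncurry hI hu (x := x) hτ)
    simpa using (hDt.clm_apply (hasDerivAt_const τ (x, (0 : ℝ)))).fun_mul
      (hDt.clm_apply (hasDerivAt_const τ ((0 : E), (1 : ℝ))))
  · filter_upwards [hI.mem_nhds ht] with τ hτ
    simp only [fderiv_eq_fderiv_uncurry hI hu hτ, deriv_eq_fderiv_uncurry hI hu hτ]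
  · simp only [fderiv_deriv_eq_fderiv_fderiv_uncurry hI hu ht,
      deriv_deriv_eq_fderiv_fderiv_uncurry hI hu ht]
    simp only [fderiv_eq_fderiv_uncurry hI hu ht, deriv_eq_fderiv_uncurry hI hu ht]

end SpaceTime

section Coordinates

variable {f : (Fin 3 → ℝ) → ℝ} {x : Fin 3 → ℝ}

theorem pder_eq_fderiv (hf : DifferentiableAt ℝ f x) (i : Fin 3) :
    pder f i x = fderiv ℝ f x (Pi.single i 1) := by
  have hf' : HasFDerivAt f (fderiv ℝ f x) (update x i (x i)) := by
    rw [update_eq_self]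
    exact hf.hasFDerivAt
  exact (hf'.comp_hasDerivAt (x i) (hasDerivAt_update x i (x i))).deriv

theorem sum_mul_pder_eq_fderiv_apply_self (hf : DifferentiableAt ℝ f x) :
    ∑ i, x i * pder f i x = fderiv ℝ f x x := by
  have hx : ∑ i, x i • Pi.single i (1 : ℝ) = x := by
    ext j
    simp [Pi.single_apply]
  calc ∑ i, x i * pder f i x = fderiv ℝ f x (∑ i, x i • Pi.single i 1) := by
        rw [map_sum]
        simp only [map_smul, smul_eq_mul, pder_eq_fderiv hf]
    _ = fderiv ℝ f x x := by rw [hx]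

theorem lap_eq_sum_fderiv_fderiv (hf : ContDiff ℝ 2 f) (x : Fin 3 → ℝ) :
    lap f x = ∑ i, fderiv ℝ (fderiv ℝ f) x (Pi.single i 1) (Pi.single i 1) := by
  have hD : Differentiable ℝ (fderiv ℝ f) :=
    (hf.fderiv_right (by norm_num : (1 : WithTop ℕ∞) + 1 ≤ 2)).differentiable one_ne_zero
  refine Finset.sum_congr rfl fun i _ => ?_
  have hinner : ∀ s, deriv (fun s' => f (update x i s')) s
      = fderiv ℝ f (update x i s) (Pi.single i 1) := fun s => by
    simpa [pder] using pder_eq_fderiv (hf.differentiable two_ne_zero (update x i s)) i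
  simp_rw [hinner]
  have houter := pder_eq_fderiv ((hD x).clm_apply (differentiableAt_const (Pi.single i (1 : ℝ)))) i
  simp only [pder] at houter
  rw [houter, fderiv_clm_apply (hD x) (differentiableAt_const _)]
  simp

theorem sq_lt_sum_sq_of_notMem_closedBall {n : ℕ} {R : ℝ} {x : Fin n → ℝ}
    (hx : x ∉ Metric.closedBall 0 |R|) : R ^ 2 < ∑ i, x i ^ 2 := by
  rw [mem_closedBall_zero_iff, pi_norm_le_iff_of_nonneg (abs_nonneg R)] at hx
  push Not at hx
  obtain ⟨i, hi⟩ := hx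
  calc R ^ 2 = |R| ^ 2 := (sq_abs R).symm
    _ < ‖x i‖ ^ 2 := by gcongr
    _ = x i ^ 2 := by rw [Real.norm_eq_abs, sq_abs]
    _ ≤ ∑ i, x i ^ 2 := Finset.single_le_sum (fun j _ => sq_nonneg (x j)) (Finset.mem_univ i)

end Coordinates

theorem stmt_15_general (p : ℝ) (hp : 1 ≤ p) (I : Set ℝ) (hIo : IsOpen I) (R : ℝ)
    (u : (Fin 3 → ℝ) → ℝ → ℝ)
    (hu : ContDiffOn ℝ 2 (fun q : (Fin 3 → ℝ) × ℝ => u q.1 q.2) (Set.univ ×ˢ I))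
    (hpde : ∀ x : Fin 3 → ℝ, ∀ t ∈ I,
      deriv (fun τ => deriv (fun σ => u x σ) τ) t
        = lap (fun y => u y t) x - |u x t| ^ (p - 1) * u x t)
    (hsupp : ∀ t ∈ I, ∀ x : Fin 3 → ℝ, R ^ 2 < ∑ i, x i ^ 2 → u x t = 0) :
    ∀ t ∈ I, HasDerivAt
      (fun τ => ∫ x : Fin 3 → ℝ,
        (∑ i, x i * pder (fun y => u y τ) i x) * deriv (fun σ => u x σ) τ)
      (-(3 / 2) * (∫ x : Fin 3 → ℝ, (deriv (fun σ => u x σ) t) ^ 2)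
        + (1 / 2) * (∫ x : Fin 3 → ℝ, ∑ i, pder (fun y => u y t) i x ^ 2)
        + (3 / (p + 1)) * (∫ x : Fin 3 → ℝ, |u x t| ^ (p + 1))) t := by
  intro t ht
  have hK := isCompact_closedBall (0 : Fin 3 → ℝ) |R|
  have hsuppK : ∀ τ ∈ I, ∀ x ∉ Metric.closedBall 0 |R|, u x τ = 0 := fun τ hτ x hx =>
    hsupp τ hτ x (sq_lt_sum_sq_of_notMem_closedBall hx)
  have hφ : ContDiff ℝ 2 (u · t) := contDiff_of_contDiffOn_uncurry hu ht
  refine ((hasDerivAt_integral_fderiv_apply_self_mul_deriv (μ := volume) hIo hu hK hsuppK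
    ht).congr_of_eventuallyEq ?_).congr_deriv ?_
  · filter_upwards [hIo.mem_nhds ht] with τ hτ
    simp_rw [sum_mul_pder_eq_fderiv_apply_self
      ((contDiff_of_contDiffOn_uncurry hu hτ).differentiable two_ne_zero _)]
  · simp_rw [hpde _ t ht, lap_eq_sum_fderiv_fderiv hφ, pder_eq_fderiv (hφ.differentiable two_ne_zero _),
      show p - 1 = p + 1 - 2 by ring]
    rw [integral_virial (fun i => Pi.single i 1) hφ (HasCompactSupport.intro hK (hsuppK t ht))
      (contDiff_deriv_of_contDiffOn_uncurry hIo hu ht) (hasCompactSupport_deriv hIo hK hsuppK ht)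
      (by linarith)]
    norm_num

/-- Identity iii) of Lemma 5.3 (virial/Morawetz-type identity) for spatially compactly
supported classical solutions of `∂_t² u = Δu − |u|^{p−1}u` on `ℝ³ × I`:
`d/dt ∫ (x·∇u) ∂_t u = −(3/2)∫(∂_t u)² + (1/2)∫|∇u|² + (3/(p+1))∫|u|^{p+1}`. -/
theorem stmt_15 (p : ℝ) (hp : 1 ≤ p) (I : Set ℝ) (hIo : IsOpen I) (hIc : Convex ℝ I)
    (R : ℝ) (hR : 0 < R)
    (u : (Fin 3 → ℝ) → ℝ → ℝ)
    (hu : ContDiffOn ℝ 2 (fun q : (Fin 3 → ℝ) × ℝ => u q.1 q.2) (Set.univ ×ˢ I))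
    (hpde : ∀ x : Fin 3 → ℝ, ∀ t ∈ I,
      deriv (fun τ => deriv (fun σ => u x σ) τ) t
        = lap (fun y => u y t) x - |u x t| ^ (p - 1) * u x t)
    (hsupp : ∀ t ∈ I, ∀ x : Fin 3 → ℝ, R ^ 2 < ∑ i, x i ^ 2 → u x t = 0) :
    ∀ t ∈ I, HasDerivAt
      (fun τ => ∫ x : Fin 3 → ℝ,
        (∑ i, x i * pder (fun y => u y τ) i x) * deriv (fun σ => u x σ) τ)
      (-(3 / 2) * (∫ x : Fin 3 → ℝ, (deriv (fun σ => u x σ) t) ^ 2)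
        + (1 / 2) * (∫ x : Fin 3 → ℝ, ∑ i, pder (fun y => u y t) i x ^ 2)
        + (3 / (p + 1)) * (∫ x : Fin 3 → ℝ, |u x t| ^ (p + 1))) t :=
  stmt_15_general p hp I hIo R u hu hpde hsupp
end

section
/- Let p > 3 and set a = 2/(p−1), m = (p−1)/2. Let w : (0,∞) × ℝ → ℝ be twice continuously differentiable, set u(r,t) = w(r,t)/r, and assume ∂_t² w − ∂_r² w = −r |u|^{p−1} u on (0,∞) × ℝ. Assume that there is a nonincreasing function g₁ : (0,∞) → [0,∞) with |u(r,t)| ≤ g₁(r) r^{−a} for all r > 0 and t ∈ ℝ, and that there is a nonincreasing function G : (0,∞) → [0,∞) with G(r) → 0 as r → ∞ such that (∫_r^{4r} |∂_r w(s,t) + ∂_t w(s,t)|^m ds)^{1/m} ≤ G(r) for all r > 0 and t ∈ ℝ. Then there is a constant C_p > 0, depending only on p, such that for all r > 0 and t ∈ ℝ: (∫_r^{4r} |∂_r w(s,t) + ∂_t w(s,t)|^m ds)^{1/m} ≤ C_p g₁(r)^p. -/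
/-!
Along the characteristic `y ↦ (s + y, t - y)` the derivative of `∂ᵣw + ∂ₜw` is
`∂ᵣ²w - ∂ₜ²w = ρ |u|^(p-1) u` at `ρ = s + y` (symmetry of the Hessian and the equation), which is
bounded by `g₁(r)^p ρ^(-a-1)` since `a p = a + 2`. Integrating over `y ∈ [0, T]` gives, for `s ≥ r`,
`|(∂ᵣ + ∂ₜ)w(s, t)| ≤ |(∂ᵣ + ∂ₜ)w(s + T, t - T)| + g₁(r)^p s^(-a) / a`.
In `L^m(r, 4r)` the last term has norm `(log 4)^(1/m) g₁(r)^p / a` because `a m = 1`, while the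
first is at most the norm on `(r + T, 4(r + T))`, hence at most `G(r + T) → 0` as `T → ∞`.
-/

open MeasureTheory Set Function Filter Topology

lemma ContDiffOn.hasFDerivAt_fderiv_apply {E G : Type*} [NormedAddCommGroup E] [NormedSpace ℝ E]
    [NormedAddCommGroup G] [NormedSpace ℝ G] {F : E → G} {U : Set E} (hF : ContDiffOn ℝ 2 F U)
    (hU : IsOpen U) {q : E} (hq : q ∈ U) (v : E) :
    HasFDerivAt (fun q => fderiv ℝ F q v)
      ((ContinuousLinearMap.apply ℝ G v).comp (fderiv ℝ (fderiv ℝ F) q)) q :=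
  (ContinuousLinearMap.apply ℝ G v).hasFDerivAt.comp q
    (((hF.contDiffAt (hU.mem_nhds hq)).fderiv_right (m := 1) le_rfl).differentiableAt
      one_ne_zero).hasFDerivAt

section Slices

variable {E : Type*} [NormedAddCommGroup E] [NormedSpace ℝ E] {F : ℝ × ℝ → E}
  {L : ℝ × ℝ →L[ℝ] E}

lemma HasFDerivAt.hasDerivAt_fst_slice {s t : ℝ} (h : HasFDerivAt F L (s, t)) :
    HasDerivAt (fun ρ => F (ρ, t)) (L (1, 0)) s :=
  h.comp_hasDerivAt s ((hasDerivAt_id s).prodMk (hasDerivAt_const s t))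

lemma HasFDerivAt.hasDerivAt_snd_slice {s t : ℝ} (h : HasFDerivAt F L (s, t)) :
    HasDerivAt (fun σ => F (s, σ)) (L (0, 1)) t :=
  h.comp_hasDerivAt t ((hasDerivAt_const t s).prodMk (hasDerivAt_id t))

lemma HasFDerivAt.hasDerivAt_characteristic {s t y : ℝ} (h : HasFDerivAt F L (s + y, t - y)) :
    HasDerivAt (fun y => F (s + y, t - y)) (L (1, -1)) y := by
  have hline : HasDerivAt (fun y => (s + y, t - y)) ((1 : ℝ), (-1 : ℝ)) y := by
    simpa using ((hasDerivAt_id y).const_add s).prodMk ((hasDerivAt_id y).const_sub t)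
  exact h.comp_hasDerivAt y hline

lemma IsOpen.eventually_mem_fst_slice {U : Set (ℝ × ℝ)} (hU : IsOpen U) {s t : ℝ}
    (hst : (s, t) ∈ U) : ∀ᶠ ρ in 𝓝 s, (ρ, t) ∈ U :=
  (continuous_id.prodMk continuous_const).continuousAt.preimage_mem_nhds (hU.mem_nhds hst)

lemma IsOpen.eventually_mem_snd_slice {U : Set (ℝ × ℝ)} (hU : IsOpen U) {s t : ℝ}
    (hst : (s, t) ∈ U) : ∀ᶠ σ in 𝓝 t, (s, σ) ∈ U :=
  (continuous_const.prodMk continuous_id).continuousAt.preimage_mem_nhds (hU.mem_nhds hst)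

end Slices

section Wave

noncomputable def outgoingDeriv (w : ℝ → ℝ → ℝ) (s t : ℝ) : ℝ :=
  deriv (fun ρ => w ρ t) s + deriv (fun σ => w s σ) t

variable {w : ℝ → ℝ → ℝ} {U : Set (ℝ × ℝ)}

lemma outgoingDeriv_eq_fderiv {s t : ℝ} (hw : DifferentiableAt ℝ (uncurry w) (s, t)) :
    outgoingDeriv w s t = fderiv ℝ (uncurry w) (s, t) (1, 1) := by
  have hρ : HasDerivAt (fun ρ => w ρ t) _ s := hw.hasFDerivAt.hasDerivAt_fst_slice
  have hσ : HasDerivAt (fun σ => w s σ) _ t := hw.hasFDerivAt.hasDerivAt_snd_slice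
  rw [outgoingDeriv, hρ.deriv, hσ.deriv, ← map_add, Prod.mk_add_mk, add_zero, zero_add]

lemma continuousOn_outgoingDeriv (hU : IsOpen U) (hw : ContDiffOn ℝ 1 (uncurry w) U) :
    ContinuousOn (uncurry (outgoingDeriv w)) U := by
  refine ((ContinuousLinearMap.apply ℝ ℝ ((1 : ℝ), (1 : ℝ))).continuous.comp_continuousOn
    (hw.continuousOn_fderiv_of_isOpen hU le_rfl)).congr fun q hq => ?_
  exact outgoingDeriv_eq_fderiv ((hw.contDiffAt (hU.mem_nhds hq)).differentiableAt one_ne_zero)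

lemma eventuallyEq_deriv_fst_slice (hU : IsOpen U) (hw : ContDiffOn ℝ 1 (uncurry w) U)
    {s t : ℝ} (hst : (s, t) ∈ U) :
    (fun ρ => deriv (fun ρ' => w ρ' t) ρ)
      =ᶠ[𝓝 s] fun ρ => fderiv ℝ (uncurry w) (ρ, t) (1, 0) := by
  filter_upwards [hU.eventually_mem_fst_slice hst] with ρ hρ
  exact ((hw.contDiffAt (hU.mem_nhds hρ)).differentiableAt one_ne_zero).hasFDerivAt
    |>.hasDerivAt_fst_slice.deriv

lemma eventuallyEq_deriv_snd_slice (hU : IsOpen U) (hw : ContDiffOn ℝ 1 (uncurry w) U)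
    {s t : ℝ} (hst : (s, t) ∈ U) :
    (fun σ => deriv (fun σ' => w s σ') σ)
      =ᶠ[𝓝 t] fun σ => fderiv ℝ (uncurry w) (s, σ) (0, 1) := by
  filter_upwards [hU.eventually_mem_snd_slice hst] with σ hσ
  exact ((hw.contDiffAt (hU.mem_nhds hσ)).differentiableAt one_ne_zero).hasFDerivAt
    |>.hasDerivAt_snd_slice.deriv

lemma deriv_deriv_fst_slice (hU : IsOpen U) (hw : ContDiffOn ℝ 2 (uncurry w) U) {s t : ℝ}
    (hst : (s, t) ∈ U) :
    deriv (fun ρ => deriv (fun ρ' => w ρ' t) ρ) s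
      = fderiv ℝ (fderiv ℝ (uncurry w)) (s, t) (1, 0) (1, 0) := by
  rw [(eventuallyEq_deriv_fst_slice hU (hw.of_le one_le_two) hst).deriv_eq]
  exact (hw.hasFDerivAt_fderiv_apply hU hst (1, 0)).hasDerivAt_fst_slice.deriv

lemma deriv_deriv_snd_slice (hU : IsOpen U) (hw : ContDiffOn ℝ 2 (uncurry w) U) {s t : ℝ}
    (hst : (s, t) ∈ U) :
    deriv (fun σ => deriv (fun σ' => w s σ') σ) t
      = fderiv ℝ (fderiv ℝ (uncurry w)) (s, t) (0, 1) (0, 1) := by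
  rw [(eventuallyEq_deriv_snd_slice hU (hw.of_le one_le_two) hst).deriv_eq]
  exact (hw.hasFDerivAt_fderiv_apply hU hst (0, 1)).hasDerivAt_snd_slice.deriv

lemma hasDerivAt_outgoingDeriv_characteristic (hU : IsOpen U) (hw : ContDiffOn ℝ 2 (uncurry w) U)
    {s t y : ℝ} (hy : (s + y, t - y) ∈ U) :
    HasDerivAt (fun y => outgoingDeriv w (s + y) (t - y))
      (deriv (fun ρ => deriv (fun ρ' => w ρ' (t - y)) ρ) (s + y)
        - deriv (fun σ => deriv (fun σ' => w (s + y) σ') σ) (t - y)) y := by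
  have hline : ∀ᶠ y' in 𝓝 y, (s + y', t - y') ∈ U :=
    ((continuous_const.add continuous_id).prodMk
      (continuous_const.sub continuous_id)).continuousAt.preimage_mem_nhds (hU.mem_nhds hy)
  have heq : (fun y => outgoingDeriv w (s + y) (t - y))
      =ᶠ[𝓝 y] fun y => fderiv ℝ (uncurry w) (s + y, t - y) (1, 1) := by
    filter_upwards [hline] with y' hy'
    exact outgoingDeriv_eq_fderiv ((hw.contDiffAt (hU.mem_nhds hy')).differentiableAt two_ne_zero)
  refine ((hw.hasFDerivAt_fderiv_apply hU hy (1, 1)).hasDerivAt_characteristic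
    |>.congr_of_eventuallyEq heq).congr_deriv ?_
  set D2 := fderiv ℝ (fderiv ℝ (uncurry w)) (s + y, t - y)
  have hsymm : D2 (1, 0) (0, 1) = D2 (0, 1) (1, 0) :=
    (hw.contDiffAt (hU.mem_nhds hy)).isSymmSndFDerivAt (by simp) _ _
  rw [deriv_deriv_fst_slice hU hw hy, deriv_deriv_snd_slice hU hw hy]
  have e1 : ((1 : ℝ), (-1 : ℝ)) = ((1 : ℝ), (0 : ℝ)) - ((0 : ℝ), (1 : ℝ)) := by norm_num
  have e2 : ((1 : ℝ), (1 : ℝ)) = ((1 : ℝ), (0 : ℝ)) + ((0 : ℝ), (1 : ℝ)) := by norm_num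
  change D2 (1, -1) (1, 1) = _
  rw [e1, e2, map_sub, sub_apply, map_add, map_add, hsymm]
  ring

end Wave

lemma abs_sub_le_of_abs_deriv_le_rpow {φ φ' : ℝ → ℝ} {s a K T : ℝ} (hs : 0 < s) (ha : 0 < a)
    (hT : 0 ≤ T) (hφ : ∀ y ∈ Icc 0 T, HasDerivAt φ (φ' y) y)
    (hbound : ∀ y ∈ Ico 0 T, |φ' y| ≤ K * (s + y) ^ (-a - 1)) :
    |φ T - φ 0| ≤ K / a * (s ^ (-a) - (s + T) ^ (-a)) := by
  have hpos : ∀ y ∈ Icc 0 T, 0 < s + y := fun y hy => by linarith [hy.1]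
  have hB : ∀ y ∈ Icc 0 T, HasDerivAt (fun y => K / a * (s ^ (-a) - (s + y) ^ (-a)))
      (K * (s + y) ^ (-a - 1)) y := by
    intro y hy
    have h := ((Real.hasDerivAt_rpow_const (p := -a) (Or.inl (hpos y hy).ne')).comp y
      ((hasDerivAt_id y).const_add s)).const_sub (s ^ (-a)) |>.const_mul (K / a)
    refine h.congr_deriv ?_
    field_simp
  refine image_norm_le_of_norm_deriv_right_le_deriv_boundary' (f := fun y => φ y - φ 0)
    (fun y hy => ((hφ y hy).sub_const _).continuousAt.continuousWithinAt)
    (fun y hy => ((hφ y (Ico_subset_Icc_self hy)).sub_const _).hasDerivWithinAt)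
    (by simp) (fun y hy => (hB y hy).continuousAt.continuousWithinAt)
    (fun y hy => (hB y (Ico_subset_Icc_self hy)).hasDerivWithinAt) hbound ⟨hT, le_rfl⟩

lemma abs_mul_abs_rpow_mul_le {ρ v g a p : ℝ} (hρ : 0 < ρ) (hg : 0 ≤ g) (hp : 0 < p)
    (hv : |v| ≤ g * ρ ^ (-a)) : |ρ * |v| ^ (p - 1) * v| ≤ g ^ p * ρ ^ (1 - a * p) := by
  have hvp : |v| ^ (p - 1) * |v| = |v| ^ p := by
    rw [← Real.rpow_add_one' (abs_nonneg v) (by simpa using hp.ne'), sub_add_cancel]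
  calc |ρ * |v| ^ (p - 1) * v| = ρ * |v| ^ p := by
        rw [abs_mul, abs_mul, abs_of_pos hρ, abs_of_nonneg (by positivity), ← hvp, mul_assoc]
    _ ≤ ρ * (g * ρ ^ (-a)) ^ p := by gcongr
    _ = g ^ p * ρ ^ (1 - a * p) := by
        rw [Real.mul_rpow hg (by positivity), ← Real.rpow_mul hρ.le, sub_eq_add_neg,
          Real.rpow_add hρ, Real.rpow_one]
        ring_nf

lemma abs_outgoingDeriv_le_of_wave {w u : ℝ → ℝ → ℝ} {p a g s t T : ℝ} (hp : 0 < p)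
    (ha : 0 < a) (hap : a * p = a + 2) (hw : ContDiffOn ℝ 2 (uncurry w) (Ioi 0 ×ˢ univ))
    (hwave : ∀ r ∈ Ioi (0 : ℝ), ∀ t : ℝ,
      deriv (fun σ => deriv (fun σ' => w r σ') σ) t
        - deriv (fun ρ => deriv (fun ρ' => w ρ' t) ρ) r = -(r * |u r t| ^ (p - 1) * u r t))
    (hg : 0 ≤ g) (hu : ∀ ρ ≥ s, ∀ τ, |u ρ τ| ≤ g * ρ ^ (-a)) (hs : 0 < s) (hT : 0 ≤ T) :
    |outgoingDeriv w s t| ≤ |outgoingDeriv w (s + T) (t - T)| + g ^ p / a * s ^ (-a) := by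
  have hchar := abs_sub_le_of_abs_deriv_le_rpow
    (φ := fun y => outgoingDeriv w (s + y) (t - y)) (K := g ^ p) hs ha hT
    (fun y hy => hasDerivAt_outgoingDeriv_characteristic (isOpen_Ioi.prod isOpen_univ) hw
      ⟨show 0 < s + y by linarith [hy.1], trivial⟩)
    (fun y hy => by
      have hρ : 0 < s + y := by linarith [hy.1]
      rw [← neg_sub, hwave _ hρ, neg_neg, show -a - 1 = 1 - a * p by linarith]
      exact abs_mul_abs_rpow_mul_le hρ hg hp (hu _ (by linarith [hy.1]) _))
  simp only [add_zero, sub_zero] at hchar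
  rw [mul_sub, abs_sub_comm] at hchar
  have htail : 0 ≤ g ^ p / a * (s + T) ^ (-a) := by positivity
  linarith [abs_sub_abs_le_abs_sub (outgoingDeriv w s t) (outgoingDeriv w (s + T) (t - T))]

lemma add_rpow_le_two_rpow_mul {x y c : ℝ} (hx : 0 ≤ x) (hy : 0 ≤ y) (hc : 0 ≤ c) :
    (x + y) ^ c ≤ 2 ^ c * (x ^ c + y ^ c) := by
  calc (x + y) ^ c ≤ (2 * max x y) ^ c := by
        gcongr
        linarith [le_max_left x y, le_max_right x y]
    _ = 2 ^ c * max x y ^ c := Real.mul_rpow zero_le_two (le_max_of_le_left hx)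
    _ ≤ 2 ^ c * (x ^ c + y ^ c) := by
        have := Real.rpow_nonneg hx c
        have := Real.rpow_nonneg hy c
        gcongr
        rcases max_cases x y with ⟨h, _⟩ | ⟨h, _⟩ <;> rw [h] <;> linarith

lemma setIntegral_abs_rpow_rpow_inv_le {α : Type*} [MeasurableSpace α] {μ : Measure α}
    {S : Set α} (hS : MeasurableSet S) {f g k : α → ℝ} {m : ℝ} (hm : 1 ≤ m)
    (hg : IntegrableOn (fun x => |g x| ^ m) S μ) (hk : IntegrableOn (fun x => k x ^ m) S μ)
    (hk0 : ∀ x ∈ S, 0 ≤ k x) (hfgk : ∀ x ∈ S, |f x| ≤ |g x| + k x) :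
    (∫ x in S, |f x| ^ m ∂μ) ^ (1 / m)
      ≤ 2 * ((∫ x in S, |g x| ^ m ∂μ) ^ (1 / m) + (∫ x in S, k x ^ m ∂μ) ^ (1 / m)) := by
  have hm0 : 0 < m := by linarith
  set A := ∫ x in S, |g x| ^ m ∂μ
  set B := ∫ x in S, k x ^ m ∂μ
  have hA : 0 ≤ A := setIntegral_nonneg hS fun x _ => by positivity
  have hB : 0 ≤ B := setIntegral_nonneg hS fun x hx => Real.rpow_nonneg (hk0 x hx) m
  have hint : ∫ x in S, |f x| ^ m ∂μ ≤ 2 ^ m * (A + B) := by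
    rw [← integral_add hg hk, ← integral_const_mul]
    refine integral_mono_of_nonneg (Eventually.of_forall fun x => by positivity)
      ((hg.add hk).const_mul _) ((ae_restrict_iff' hS).2 (Eventually.of_forall fun x hx => ?_))
    calc |f x| ^ m ≤ (|g x| + k x) ^ m := by gcongr; exact hfgk x hx
      _ ≤ _ := add_rpow_le_two_rpow_mul (abs_nonneg _) (hk0 x hx) hm0.le
  calc (∫ x in S, |f x| ^ m ∂μ) ^ (1 / m) ≤ (2 ^ m * (A + B)) ^ (1 / m) := by gcongr
    _ = 2 * (A + B) ^ (1 / m) := by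
        rw [Real.mul_rpow (by positivity) (by positivity), ← Real.rpow_mul zero_le_two,
          mul_one_div_cancel hm0.ne', Real.rpow_one]
    _ ≤ 2 * (A ^ (1 / m) + B ^ (1 / m)) := by
        gcongr
        exact Real.rpow_add_le_add_rpow hA hB (by positivity) ((div_le_one hm0).2 hm)

lemma integrableOn_Ioc_of_continuousOn_Ioi {f : ℝ → ℝ} (hf : ContinuousOn f (Ioi 0)) {r R : ℝ}
    (hr : 0 < r) : IntegrableOn f (Ioc r R) :=
  (hf.mono fun _ hs => hr.trans_le hs.1).integrableOn_Icc.mono_set Ioc_subset_Icc_self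

lemma setIntegral_Ioc_mul_rpow_neg_rpow {r c K a m : ℝ} (hr : 0 < r) (hc : 1 ≤ c) (hK : 0 ≤ K)
    (ham : a * m = 1) : ∫ s in Ioc r (c * r), (K * s ^ (-a)) ^ m = K ^ m * Real.log c := by
  have hrc : r ≤ c * r := le_mul_of_one_le_left hr.le hc
  rw [setIntegral_congr_fun measurableSet_Ioc (g := fun s => K ^ m * s⁻¹) fun s hs => ?_,
    integral_const_mul, ← intervalIntegral.integral_of_le hrc,
    integral_inv_of_pos hr (hr.trans_le hrc), mul_div_cancel_right₀ c hr.ne']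
  have hs0 : 0 < s := hr.trans hs.1
  rw [Real.mul_rpow hK (by positivity), ← Real.rpow_mul hs0.le, neg_mul, ham, Real.rpow_neg_one]

lemma setIntegral_Ioc_comp_add_right_le {f : ℝ → ℝ} {r c T : ℝ} (hr : 0 ≤ r) (hc : 1 ≤ c)
    (hT : 0 ≤ T) (hf0 : ∀ s, 0 ≤ f s) (hf : IntegrableOn f (Ioc (r + T) (c * (r + T)))) :
    ∫ s in Ioc r (c * r), f (s + T) ≤ ∫ s in Ioc (r + T) (c * (r + T)), f s := by
  rw [← intervalIntegral.integral_of_le (le_mul_of_one_le_left hr hc),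
    intervalIntegral.integral_comp_add_right, intervalIntegral.integral_of_le (by nlinarith)]
  exact setIntegral_mono_set hf (Eventually.of_forall fun s => hf0 s)
    (Ioc_subset_Ioc le_rfl (by nlinarith)).eventuallyLE

lemma rpow_setIntegral_Ioc_le_of_abs_le_shift {f g : ℝ → ℝ} {r c T K a m : ℝ} (hr : 0 < r)
    (hc : 1 ≤ c) (hT : 0 ≤ T) (hK : 0 ≤ K) (hm : 1 ≤ m) (ham : a * m = 1)
    (hg : ContinuousOn g (Ioi 0))
    (hfg : ∀ s ∈ Ioc r (c * r), |f s| ≤ |g (s + T)| + K * s ^ (-a)) :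
    (∫ s in Ioc r (c * r), |f s| ^ m) ^ (1 / m)
      ≤ 2 * ((∫ s in Ioc (r + T) (c * (r + T)), |g s| ^ m) ^ (1 / m)
        + K * Real.log c ^ (1 / m)) := by
  have hm0 : 0 < m := by linarith
  have hgm : ContinuousOn (fun s => |g s| ^ m) (Ioi 0) :=
    hg.abs.rpow_const fun _ _ => Or.inr hm0.le
  have hshift : ContinuousOn (fun s => |g (s + T)| ^ m) (Ioi 0) :=
    hgm.comp (continuous_add_const T).continuousOn fun s (hs : 0 < s) =>
      show 0 < s + T by linarith
  have hk : ContinuousOn (fun s => (K * s ^ (-a)) ^ m) (Ioi 0) :=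
    (continuousOn_const.mul (continuousOn_id.rpow_const fun s hs => Or.inl (ne_of_gt hs)))
      |>.rpow_const fun _ _ => Or.inr hm0.le
  refine (setIntegral_abs_rpow_rpow_inv_le measurableSet_Ioc hm
    (integrableOn_Ioc_of_continuousOn_Ioi hshift hr) (integrableOn_Ioc_of_continuousOn_Ioi hk hr)
    (fun s hs => by have := hr.trans hs.1; positivity) hfg).trans ?_
  rw [setIntegral_Ioc_mul_rpow_neg_rpow hr hc hK ham,
    Real.mul_rpow (by positivity) (Real.log_nonneg hc), ← Real.rpow_mul hK,
    mul_one_div_cancel hm0.ne', Real.rpow_one]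
  gcongr
  exact setIntegral_Ioc_comp_add_right_le hr.le hc hT (fun s => by positivity)
    (integrableOn_Ioc_of_continuousOn_Ioi hgm (by linarith))

/-- Lemma 3.11 (estimate (3.12)) in abstract form: with `p > 3`, `a = 2/(p−1)`,
`m = (p−1)/2`, there is a constant `C = C(p)` such that whenever `w` solves
`∂_t² w − ∂_r² w = −r|u|^{p−1}u` on `(0,∞) × ℝ` with `u = w/r`, `|u(r,t)| ≤ g₁(r) r^{−a}`
with `g₁` nonincreasing and nonnegative, and the `L^m` norms of `∂_r w + ∂_t w` on
`(r,4r)` are bounded by a nonincreasing function `G(r) → 0`, then those `L^m` norms are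
in fact bounded by `C g₁(r)^p`. -/
theorem stmt_17 (p a m : ℝ) (hp : 3 < p) (ha : a = 2 / (p - 1)) (hm : m = (p - 1) / 2) :
    ∃ C > (0 : ℝ), ∀ w u : ℝ → ℝ → ℝ,
      ContDiffOn ℝ 2 (Function.uncurry w) (Set.Ioi (0 : ℝ) ×ˢ Set.univ) →
      (∀ r t : ℝ, u r t = w r t / r) →
      (∀ r ∈ Set.Ioi (0 : ℝ), ∀ t : ℝ,
        deriv (fun σ => deriv (fun σ' => w r σ') σ) t
          - deriv (fun ρ => deriv (fun ρ' => w ρ' t) ρ) r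
          = -(r * |u r t| ^ (p - 1) * u r t)) →
      ∀ g₁ G : ℝ → ℝ,
      (∀ r > (0 : ℝ), 0 ≤ g₁ r) →
      (∀ r s : ℝ, 0 < r → r ≤ s → g₁ s ≤ g₁ r) →
      (∀ r > (0 : ℝ), ∀ t : ℝ, |u r t| ≤ g₁ r * r ^ (-a)) →
      (∀ r > (0 : ℝ), 0 ≤ G r) →
      (∀ r s : ℝ, 0 < r → r ≤ s → G s ≤ G r) →
      Filter.Tendsto G Filter.atTop (nhds 0) →
      (∀ r > (0 : ℝ), ∀ t : ℝ,
        (∫ s in Set.Ioc r (4 * r),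
          |deriv (fun ρ => w ρ t) s + deriv (fun σ => w s σ) t| ^ m) ^ (1 / m) ≤ G r) →
      ∀ r > (0 : ℝ), ∀ t : ℝ,
        (∫ s in Set.Ioc r (4 * r),
          |deriv (fun ρ => w ρ t) s + deriv (fun σ => w s σ) t| ^ m) ^ (1 / m)
          ≤ C * g₁ r ^ p := by
  have ha0 : 0 < a := by rw [ha]; exact div_pos two_pos (by linarith)
  have hm1 : 1 ≤ m := by rw [hm]; linarith
  have hp1 : p - 1 ≠ 0 := by linarith
  have ham : a * m = 1 := by rw [ha, hm]; field_simp
  have hap : a * p = a + 2 := by rw [ha]; field_simp; ring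
  refine ⟨2 * Real.log 4 ^ (1 / m) / a, by positivity, ?_⟩
  intro w u hw _ hwave g₁ G hg₁0 hg₁mono hub _ _ hGlim hGbound r hr t
  set K := g₁ r ^ p / a
  have hK : 0 ≤ K := div_nonneg (Real.rpow_nonneg (hg₁0 r hr) p) ha0.le
  have hub' : ∀ ρ ≥ r, ∀ τ, |u ρ τ| ≤ g₁ r * ρ ^ (-a) := fun ρ hρ τ =>
    (hub ρ (hr.trans_le hρ) τ).trans <|
      mul_le_mul_of_nonneg_right (hg₁mono r ρ hr hρ) (Real.rpow_nonneg (hr.le.trans hρ) _)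
  have hslice : ∀ τ, ContinuousOn (fun s => outgoingDeriv w s τ) (Ioi 0) := fun τ =>
    (continuousOn_outgoingDeriv (isOpen_Ioi.prod isOpen_univ) (hw.of_le one_le_two)).comp
      (continuous_id.prodMk continuous_const).continuousOn fun s hs => ⟨hs, trivial⟩
  have hchar : ∀ T ≥ 0, ∀ s ∈ Ioc r (4 * r),
      |outgoingDeriv w s t| ≤ |outgoingDeriv w (s + T) (t - T)| + K * s ^ (-a) := fun T hT s hs =>
    abs_outgoingDeriv_le_of_wave (by linarith) ha0 hap hw hwave (hg₁0 r hr)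
      (fun ρ hρ => hub' ρ (by linarith [hs.1])) (hr.trans hs.1) hT
  have hshift : ∀ T ≥ 0, (∫ s in Ioc r (4 * r), |outgoingDeriv w s t| ^ m) ^ (1 / m)
      ≤ 2 * (G (r + T) + K * Real.log 4 ^ (1 / m)) := fun T hT =>
    (rpow_setIntegral_Ioc_le_of_abs_le_shift hr (by norm_num) hT hK hm1 ham (hslice (t - T))
      (hchar T hT)).trans (by gcongr; exact hGbound _ (by linarith) _)
  have hlim : Tendsto (fun T => 2 * (G (r + T) + K * Real.log 4 ^ (1 / m))) atTop
      (𝓝 (2 * (0 + K * Real.log 4 ^ (1 / m)))) :=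
    ((hGlim.comp (tendsto_atTop_add_const_left atTop r tendsto_id)).add_const _).const_mul 2
  calc _ ≤ 2 * (0 + K * Real.log 4 ^ (1 / m)) :=
        ge_of_tendsto hlim (eventually_atTop.2 ⟨0, hshift⟩)
    _ = 2 * Real.log 4 ^ (1 / m) / a * g₁ r ^ p := by ring
end
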